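/- arXiv:2006.15316 — 3 statements merged into one kernel-verified Lean document; each statement's English description precedes it below -/
import Mathlib

section
/- For all real λ with |λ| ≤ 1/4, we have e^{-λ}/√(1-2λ) ≤ e^{2λ²}. -/
/-!
Taking logarithms, the claim is `x - x² ≤ log (1 + x)` at `x = -2λ ≥ -1/2`. For `x ≥ 0` this
follows from `log (1 + x) ≥ 2x / (x + 2)`; for `-1/2 ≤ x ≤ 0` it is equivalent to
`(1 + x) exp (x² - x) ≥ 1`, and the quadratic lower bound for `exp` already suffices.
-/

open Real

lemma sub_sq_div_two_le_log_one_add {x : ℝ} (hx : 0 ≤ x) : x - x ^ 2 / 2 ≤ log (1 + x) := by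
  refine le_trans ?_ (le_log_one_add_of_nonneg hx)
  rw [le_div_iff₀ (by linarith)]
  nlinarith [pow_nonneg hx 3]

lemma one_le_one_add_mul_exp_sq_sub {x : ℝ} (hx : -(1 / 2) ≤ x) (hx0 : x ≤ 0) :
    1 ≤ (1 + x) * exp (x ^ 2 - x) := by
  have hexp := quadratic_le_exp_of_nonneg (by nlinarith : 0 ≤ x ^ 2 - x)
  -- `(1 + x) (1 + s + s² / 2) - 1 = x² (1 + x - x² + x³) / 2` for `s = x² - x`
  have hcubic : 0 ≤ 1 + x - x ^ 2 + x ^ 3 := by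
    nlinarith [mul_nonneg (neg_nonneg.2 hx0) (sq_nonneg x)]
  calc 1 ≤ (1 + x) * (1 + (x ^ 2 - x) + (x ^ 2 - x) ^ 2 / 2) := by
        nlinarith [mul_nonneg (sq_nonneg x) hcubic]
    _ ≤ (1 + x) * exp (x ^ 2 - x) := by gcongr; linarith

lemma sub_sq_le_log_one_add {x : ℝ} (hx : -(1 / 2) ≤ x) : x - x ^ 2 ≤ log (1 + x) := by
  rcases le_total 0 x with hx0 | hx0
  · nlinarith [sub_sq_div_two_le_log_one_add hx0]
  · rw [le_log_iff_exp_le (by linarith), show x - x ^ 2 = -(x ^ 2 - x) by ring, exp_neg,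
      inv_le_iff_one_le_mul₀ (exp_pos _)]
    exact one_le_one_add_mul_exp_sq_sub hx hx0

/-- For all real `λ` with `|λ| ≤ 1/4`,
`e^{-λ} / √(1 - 2λ) ≤ e^{2λ²}`. -/
theorem exp_div_sqrt_le_exp_sq (l : ℝ) (h : |l| ≤ 1 / 4) :
    Real.exp (-l) / Real.sqrt (1 - 2 * l) ≤ Real.exp (2 * l ^ 2) := by
  have hl : l ≤ 1 / 4 := le_of_abs_le h
  have hpos : 0 < 1 - 2 * l := by linarith
  have hlog := sub_sq_le_log_one_add (x := -2 * l) (by linarith)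
  rw [show 1 + -2 * l = 1 - 2 * l by ring] at hlog
  rw [div_le_iff₀ (sqrt_pos.2 hpos), ← exp_log (sqrt_pos.2 hpos), log_sqrt hpos.le, ← exp_add,
    exp_le_exp]
  linarith
end

section
/- Let Γ be the one-step Riccati difference operator Γ(P) := τQ + (I+τA)ᵀP(I+τA) − (I+τA)ᵀPτB(R+τBᵀPB)⁻¹BᵀP(I+τA). Then for all positive semidefinite P, P', ‖Γ(P) − Γ(P')‖₂ ≤ (1 + τ‖R⁻¹‖₂‖B‖₂² max{‖P‖₂,‖P'‖₂})² (1+τ‖A‖₂)² ‖P − P'‖₂. -/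
open Matrix

/-- The spectral norm (operator norm induced by Euclidean norms) of a real matrix. -/
noncomputable def sNorm {m n : ℕ} (A : Matrix (Fin m) (Fin n) ℝ) : ℝ :=
  ‖LinearMap.toContinuousLinearMap (Matrix.toEuclideanLin A)‖

/-- The one-step Riccati difference operator. -/
noncomputable def riccatiStep {n d : ℕ} (τ : ℝ) (Q A : Matrix (Fin n) (Fin n) ℝ)
    (R : Matrix (Fin d) (Fin d) ℝ) (B : Matrix (Fin n) (Fin d) ℝ)
    (P : Matrix (Fin n) (Fin n) ℝ) : Matrix (Fin n) (Fin n) ℝ :=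
  τ • Q + (1 + τ • A)ᵀ * P * (1 + τ • A)
    - (1 + τ • A)ᵀ * P * (τ • B) * (R + τ • (Bᵀ * P * B))⁻¹ * Bᵀ * P * (1 + τ • A)

/-!
Write `Φ_P(K) = τQ + τKᵀRK + (I + τA - τBK)ᵀ P (I + τA - τBK)` for the cost of the feedback
gain `K`. Completing the square, `Φ_P(K) = Γ(P) + τ (K - K_P)ᵀ (R + τBᵀPB) (K - K_P)` with
`K_P = (R + τBᵀPB)⁻¹ BᵀP (I + τA)`, so `Γ(P)` is the Loewner minimum of `Φ_P`, attained at `K_P`.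
Hence `Γ(P) - Γ(P') ≤ Φ_P(K_P') - Φ_P'(K_P') = F'ᵀ (P - P') F'` with `F' = I + τA - τBK_P'`, and
symmetrically `Γ(P') - Γ(P) ≤ Fᵀ (P' - P) F`; a self-adjoint matrix squeezed between `-c` and `c`
has norm at most `c`. Finally `‖F'‖ ≤ (1 + τ‖R⁻¹‖‖B‖²‖P'‖)(1 + τ‖A‖)`, because `R ≤ R + τBᵀP'B`
forces `‖(R + τBᵀP'B)⁻¹‖ ≤ ‖R⁻¹‖`.
-/

open scoped Matrix.Norms.L2Operator MatrixOrder

lemma IsSelfAdjoint.units_inv {R : Type*} [Monoid R] [StarMul R] {u : Rˣ}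
    (hu : IsSelfAdjoint (u : R)) : IsSelfAdjoint (↑u⁻¹ : R) := by
  rw [IsSelfAdjoint, ← Units.coe_star_inv,
    Units.ext (by simpa using hu.star_eq : (↑(star u) : R) = u)]

/- Mathlib has these facts only for complex C⋆-algebras (`IsSelfAdjoint.le_algebraMap_norm_self`,
`CStarAlgebra.inv_le_inv`, ...); real matrices carry just an isometric `ℝ`-functional calculus. -/
section IsometricCFC

variable {A : Type*} [NormedRing A] [StarRing A] [NormedAlgebra ℝ A] [PartialOrder A]
  [StarOrderedRing A] [IsometricContinuousFunctionalCalculus ℝ A IsSelfAdjoint]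
  [NonnegSpectrumClass ℝ A]

lemma IsSelfAdjoint.le_algebraMap_norm {a : A} (ha : IsSelfAdjoint a) :
    a ≤ algebraMap ℝ A ‖a‖ :=
  (le_algebraMap_iff_spectrum_le ha).2 fun x hx =>
    (Real.le_norm_self x).trans (IsometricContinuousFunctionalCalculus.norm_spectrum_le a hx ha)

lemma norm_le_of_neg_algebraMap_le_of_le_algebraMap [StarModule ℝ A] {a : A} {c : ℝ}
    (hc : 0 ≤ c) (h₁ : -algebraMap ℝ A c ≤ a) (h₂ : a ≤ algebraMap ℝ A c) : ‖a‖ ≤ c := by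
  have ha : IsSelfAdjoint a := by
    simpa using (IsSelfAdjoint.algebraMap A (.all c)).sub (.of_nonneg (sub_nonneg.2 h₂))
  have hlo := (algebraMap_le_iff_le_spectrum (r := -c) ha).1 (by simpa using h₁)
  have hhi := (le_algebraMap_iff_spectrum_le ha).1 h₂
  simpa [cfc_id ℝ a ha] using norm_cfc_le (f := id) (a := a) hc fun x hx =>
    abs_le.2 ⟨by linarith [hlo x hx], hhi x hx⟩

lemma norm_units_inv_le_of_algebraMap_le [StarModule ℝ A] {u : Aˣ} {c : ℝ} (hc : 0 < c)
    (h : algebraMap ℝ A c ≤ u) : ‖(↑u⁻¹ : A)‖ ≤ c⁻¹ := by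
  have hu : IsSelfAdjoint (u : A) := by
    simpa using (IsSelfAdjoint.algebraMap A (.all c)).add (.of_nonneg (sub_nonneg.2 h))
  have hspec := (algebraMap_le_iff_le_spectrum hu).1 h
  rw [← cfc_id ℝ (↑u⁻¹ : A) hu.units_inv]
  refine norm_cfc_le (inv_nonneg.2 hc.le) fun y hy => ?_
  rw [← spectrum.map_inv] at hy
  have hcy := hspec _ hy
  have hy0 : 0 < y := inv_pos.1 (hc.trans_le hcy)
  rw [id, Real.norm_of_nonneg hy0.le]
  exact (le_inv_comm₀ hc hy0).1 hcy

lemma algebraMap_inv_norm_units_inv_le {u : Aˣ} (hu : 0 ≤ (u : A)) :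
    algebraMap ℝ A ‖(↑u⁻¹ : A)‖⁻¹ ≤ u := by
  refine (algebraMap_le_iff_le_spectrum (.of_nonneg hu)).2 fun x hx => ?_
  have hx0 : 0 < x := lt_of_le_of_ne (spectrum_nonneg_of_nonneg hu hx)
    (fun h => spectrum.zero_notMem ℝ u.isUnit (h ▸ hx))
  have hx' : x⁻¹ ∈ spectrum ℝ (↑u⁻¹ : A) := by
    rw [← spectrum.map_inv]
    simpa using hx
  exact inv_le_of_inv_le₀ hx0 ((Real.le_norm_self _).trans
    (IsometricContinuousFunctionalCalculus.norm_spectrum_le _ hx'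
      (IsSelfAdjoint.of_nonneg hu).units_inv))

lemma norm_units_inv_le_of_le [StarModule ℝ A] {u v : Aˣ} (hu : 0 ≤ (u : A))
    (huv : (u : A) ≤ v) : ‖(↑v⁻¹ : A)‖ ≤ ‖(↑u⁻¹ : A)‖ := by
  rcases subsingleton_or_nontrivial A with hA | hA
  · simp [Subsingleton.elim (↑v⁻¹ : A) 0]
  have hpos : 0 < ‖(↑u⁻¹ : A)‖⁻¹ := inv_pos.2 (norm_pos_iff.2 (Units.ne_zero _))
  simpa using norm_units_inv_le_of_algebraMap_le hpos
    ((algebraMap_inv_norm_units_inv_le hu).trans huv)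

end IsometricCFC

lemma sNorm_eq_norm {m n : ℕ} (M : Matrix (Fin m) (Fin n) ℝ) : sNorm M = ‖M‖ := rfl

namespace Matrix

variable {ι κ : Type*} [Fintype ι] [Fintype κ]

lemma l2_opNorm_one_le [DecidableEq ι] : ‖(1 : Matrix ι ι ℝ)‖ ≤ 1 := by
  rw [cstar_norm_def, _root_.map_one]
  exact ContinuousLinearMap.norm_id_le

lemma l2_opNorm_one_add_le [DecidableEq ι] (M : Matrix ι ι ℝ) : ‖1 + M‖ ≤ 1 + ‖M‖ :=
  (norm_add_le _ _).trans (add_le_add_left l2_opNorm_one_le _)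

lemma l2_opNorm_transpose [DecidableEq ι] [DecidableEq κ] (M : Matrix ι κ ℝ) :
    ‖Mᵀ‖ = ‖M‖ := by
  rw [← conjTranspose_eq_transpose_of_trivial, l2_opNorm_conjTranspose]

lemma IsHermitian.transpose_mul_mul_le_algebraMap [DecidableEq ι] [DecidableEq κ]
    {Δ : Matrix ι ι ℝ} (hΔ : Δ.IsHermitian) (F : Matrix ι κ ℝ) :
    Fᵀ * Δ * F ≤ algebraMap ℝ _ (‖F‖ ^ 2 * ‖Δ‖) := by
  have hsa : IsSelfAdjoint (Fᵀ * Δ * F) := by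
    simpa only [conjTranspose_eq_transpose_of_trivial] using
      (isHermitian_conjTranspose_mul_mul F hΔ).isSelfAdjoint
  refine hsa.le_algebraMap_norm.trans (algebraMap_mono _ ?_)
  calc ‖Fᵀ * Δ * F‖ ≤ ‖Fᵀ‖ * ‖Δ‖ * ‖F‖ :=
        (l2_opNorm_mul _ _).trans (mul_le_mul_of_nonneg_right (l2_opNorm_mul _ _) (norm_nonneg _))
    _ = ‖F‖ ^ 2 * ‖Δ‖ := by rw [l2_opNorm_transpose]; ring

lemma PosSemidef.smul_transpose_mul_mul {P : Matrix ι ι ℝ} (hP : P.PosSemidef) {τ : ℝ}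
    (hτ : 0 ≤ τ) (B : Matrix ι κ ℝ) : (τ • (Bᵀ * P * B)).PosSemidef := by
  simpa only [conjTranspose_eq_transpose_of_trivial] using
    (hP.conjTranspose_mul_mul_same B).smul hτ

lemma PosDef.norm_inv_le_of_le [DecidableEq ι] {R S : Matrix ι ι ℝ} (hR : R.PosDef)
    (hRS : R ≤ S) : ‖S⁻¹‖ ≤ ‖R⁻¹‖ := by
  have hS : S.PosDef := by simpa using hR.add_posSemidef (sub_nonneg.2 hRS).posSemidef
  lift R to (Matrix ι ι ℝ)ˣ using hR.isUnit
  lift S to (Matrix ι ι ℝ)ˣ using hS.isUnit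
  simpa [coe_units_inv] using norm_units_inv_le_of_le hR.posSemidef.nonneg hRS

end Matrix

namespace Riccati

variable {n d : ℕ} (τ : ℝ) (Q A : Matrix (Fin n) (Fin n) ℝ) (R : Matrix (Fin d) (Fin d) ℝ)
  (B : Matrix (Fin n) (Fin d) ℝ)

noncomputable def gain (P : Matrix (Fin n) (Fin n) ℝ) : Matrix (Fin d) (Fin n) ℝ :=
  (R + τ • (Bᵀ * P * B))⁻¹ * Bᵀ * P * (1 + τ • A)

def closedLoop (K : Matrix (Fin d) (Fin n) ℝ) : Matrix (Fin n) (Fin n) ℝ :=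
  1 + τ • A - τ • (B * K)

def closedLoopCost (P : Matrix (Fin n) (Fin n) ℝ) (K : Matrix (Fin d) (Fin n) ℝ) :
    Matrix (Fin n) (Fin n) ℝ :=
  τ • Q + τ • (Kᵀ * R * K) + (closedLoop τ A B K)ᵀ * P * closedLoop τ A B K

variable {τ Q A R B}

lemma closedLoopCost_eq_riccatiStep_add {P : Matrix (Fin n) (Fin n) ℝ} (hR : R.IsHermitian)
    (hP : P.IsHermitian) (hS : IsUnit (R + τ • (Bᵀ * P * B)).det)
    (K : Matrix (Fin d) (Fin n) ℝ) :
    closedLoopCost τ Q A R B P K = riccatiStep τ Q A R B P +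
      τ • ((K - gain τ A R B P)ᵀ * (R + τ • (Bᵀ * P * B)) * (K - gain τ A R B P)) := by
  have hPT : Pᵀ = P := hP
  have hST : (R + τ • (Bᵀ * P * B))ᵀ = R + τ • (Bᵀ * P * B) := by
    simp [Matrix.mul_assoc, hPT, show Rᵀ = R from hR]
  have hR' : R = R + τ • (Bᵀ * P * B) - τ • (Bᵀ * P * B) := by abel
  unfold closedLoopCost closedLoop riccatiStep gain
  generalize R + τ • (Bᵀ * P * B) = S at hS hST hR' ⊢
  subst hR'
  set L : Matrix (Fin n) (Fin n) ℝ := 1 + τ • A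
  set K₀ := S⁻¹ * Bᵀ * P * L
  have hSK₀ : S * K₀ = Bᵀ * P * L := by
    simp only [K₀, Matrix.mul_assoc, mul_nonsing_inv_cancel_left _ _ hS]
  have hK₀S : K₀ᵀ * S = Lᵀ * P * B := by
    rw [← hST, ← transpose_mul, hSK₀]
    simp [hPT, Matrix.mul_assoc]
  have hstep : Lᵀ * P * (τ • B) * S⁻¹ * Bᵀ * P * L = τ • (K₀ᵀ * S * K₀) := by
    rw [hK₀S]
    simp only [K₀, Matrix.mul_assoc, Matrix.smul_mul, Matrix.mul_smul]
  have hsq : (K - K₀)ᵀ * S * (K - K₀) =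
      Kᵀ * S * K - Kᵀ * (Bᵀ * P * L) - Lᵀ * P * B * K + K₀ᵀ * S * K₀ := by
    rw [← hSK₀, ← hK₀S]
    simp only [transpose_sub, Matrix.sub_mul, Matrix.mul_sub, Matrix.mul_assoc]
    abel
  rw [hstep, hsq]
  simp only [transpose_sub, transpose_smul, transpose_mul, Matrix.sub_mul, Matrix.mul_sub,
    Matrix.smul_mul, Matrix.mul_smul, Matrix.mul_assoc, smul_sub, smul_add, smul_smul]
  module

lemma closedLoopCost_sub (P P' : Matrix (Fin n) (Fin n) ℝ) (K : Matrix (Fin d) (Fin n) ℝ) :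
    closedLoopCost τ Q A R B P K - closedLoopCost τ Q A R B P' K =
      (closedLoop τ A B K)ᵀ * (P - P') * closedLoop τ A B K := by
  simp only [closedLoopCost, Matrix.mul_sub, Matrix.sub_mul]
  abel

lemma riccatiStep_le_closedLoopCost (hτ : 0 ≤ τ) (hR : R.PosDef) {P : Matrix (Fin n) (Fin n) ℝ}
    (hP : P.PosSemidef) (K : Matrix (Fin d) (Fin n) ℝ) :
    riccatiStep τ Q A R B P ≤ closedLoopCost τ Q A R B P K := by
  have hS := hR.add_posSemidef (hP.smul_transpose_mul_mul hτ B)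
  rw [closedLoopCost_eq_riccatiStep_add hR.isHermitian hP.isHermitian hS.det_pos.ne'.isUnit K]
  refine le_add_of_nonneg_right (nonneg_iff_posSemidef.2 ?_)
  simpa only [conjTranspose_eq_transpose_of_trivial] using
    (hS.posSemidef.conjTranspose_mul_mul_same (K - gain τ A R B P)).smul hτ

lemma riccatiStep_eq_closedLoopCost_gain (hτ : 0 ≤ τ) (hR : R.PosDef)
    {P : Matrix (Fin n) (Fin n) ℝ} (hP : P.PosSemidef) :
    riccatiStep τ Q A R B P = closedLoopCost τ Q A R B P (gain τ A R B P) := by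
  rw [closedLoopCost_eq_riccatiStep_add hR.isHermitian hP.isHermitian
    (hR.add_posSemidef (hP.smul_transpose_mul_mul hτ B)).det_pos.ne'.isUnit]
  simp

lemma riccatiStep_sub_le_algebraMap (hτ : 0 ≤ τ) (hR : R.PosDef)
    {P P' : Matrix (Fin n) (Fin n) ℝ} (hP : P.PosSemidef) (hP' : P'.PosSemidef) :
    riccatiStep τ Q A R B P - riccatiStep τ Q A R B P' ≤
      algebraMap ℝ _ (‖closedLoop τ A B (gain τ A R B P')‖ ^ 2 * ‖P - P'‖) := by
  calc riccatiStep τ Q A R B P - riccatiStep τ Q A R B P'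
      ≤ closedLoopCost τ Q A R B P (gain τ A R B P') -
          closedLoopCost τ Q A R B P' (gain τ A R B P') := by
        rw [← riccatiStep_eq_closedLoopCost_gain hτ hR hP']
        exact sub_le_sub_right (riccatiStep_le_closedLoopCost hτ hR hP _) _
    _ ≤ _ := by
        rw [closedLoopCost_sub]
        exact (hP.isHermitian.sub hP'.isHermitian).transpose_mul_mul_le_algebraMap _

lemma norm_closedLoop_gain_le (hτ : 0 ≤ τ) (hR : R.PosDef) {P : Matrix (Fin n) (Fin n) ℝ}
    (hP : P.PosSemidef) :
    ‖closedLoop τ A B (gain τ A R B P)‖ ≤ (1 + τ * ‖R⁻¹‖ * ‖B‖ ^ 2 * ‖P‖) * (1 + τ * ‖A‖) := by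
  set L : Matrix (Fin n) (Fin n) ℝ := 1 + τ • A
  set M := B * (R + τ • (Bᵀ * P * B))⁻¹ * Bᵀ * P
  have hBK : B * gain τ A R B P = M * L := by simp only [gain, M, L, Matrix.mul_assoc]
  have hSinv : ‖(R + τ • (Bᵀ * P * B))⁻¹‖ ≤ ‖R⁻¹‖ :=
    hR.norm_inv_le_of_le (le_add_of_nonneg_right (hP.smul_transpose_mul_mul hτ B).nonneg)
  have hM : ‖M‖ ≤ ‖R⁻¹‖ * ‖B‖ ^ 2 * ‖P‖ := by
    calc ‖M‖ ≤ ‖B‖ * ‖(R + τ • (Bᵀ * P * B))⁻¹‖ * ‖Bᵀ‖ * ‖P‖ := by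
          refine (l2_opNorm_mul _ _).trans (mul_le_mul_of_nonneg_right ?_ (norm_nonneg _))
          refine (l2_opNorm_mul _ _).trans (mul_le_mul_of_nonneg_right ?_ (norm_nonneg _))
          exact l2_opNorm_mul _ _
      _ ≤ ‖B‖ * ‖R⁻¹‖ * ‖B‖ * ‖P‖ := by rw [l2_opNorm_transpose]; gcongr
      _ = ‖R⁻¹‖ * ‖B‖ ^ 2 * ‖P‖ := by ring
  have hL : ‖L‖ ≤ 1 + τ * ‖A‖ := by
    simpa [norm_smul, abs_of_nonneg hτ] using l2_opNorm_one_add_le (τ • A)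
  calc ‖closedLoop τ A B (gain τ A R B P)‖ ≤ ‖L‖ + τ * (‖M‖ * ‖L‖) := by
        rw [closedLoop, hBK]
        refine (norm_sub_le _ _).trans ?_
        rw [norm_smul, Real.norm_of_nonneg hτ]
        gcongr
        exact l2_opNorm_mul _ _
    _ = (1 + τ * ‖M‖) * ‖L‖ := by ring
    _ ≤ (1 + τ * (‖R⁻¹‖ * ‖B‖ ^ 2 * ‖P‖)) * (1 + τ * ‖A‖) := by gcongr
    _ = _ := by ring

end Riccati

theorem riccatiStep_lipschitz_general {n d : ℕ} (τ : ℝ) (hτ : 0 < τ)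
    (Q A : Matrix (Fin n) (Fin n) ℝ) (R : Matrix (Fin d) (Fin d) ℝ)
    (B : Matrix (Fin n) (Fin d) ℝ) (hR : R.PosDef)
    (P P' : Matrix (Fin n) (Fin n) ℝ) (hP : P.PosSemidef) (hP' : P'.PosSemidef) :
    sNorm (riccatiStep τ Q A R B P - riccatiStep τ Q A R B P') ≤
      (1 + τ * sNorm R⁻¹ * sNorm B ^ 2 * max (sNorm P) (sNorm P')) ^ 2 *
        (1 + τ * sNorm A) ^ 2 * sNorm (P - P') := by
  simp only [sNorm_eq_norm]
  have hbound : ∀ {P₀ : Matrix (Fin n) (Fin n) ℝ}, P₀.PosSemidef → ‖P₀‖ ≤ max ‖P‖ ‖P'‖ →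
      ‖Riccati.closedLoop τ A B (Riccati.gain τ A R B P₀)‖ ^ 2 * ‖P - P'‖ ≤
        (1 + τ * ‖R⁻¹‖ * ‖B‖ ^ 2 * max ‖P‖ ‖P'‖) ^ 2 * (1 + τ * ‖A‖) ^ 2 * ‖P - P'‖ := by
    intro P₀ hP₀ hle
    rw [← mul_pow]
    gcongr
    exact (Riccati.norm_closedLoop_gain_le hτ.le hR hP₀).trans (by gcongr)
  refine norm_le_of_neg_algebraMap_le_of_le_algebraMap (by positivity) ?_ ?_
  · rw [neg_le, neg_sub]
    refine (Riccati.riccatiStep_sub_le_algebraMap hτ.le hR hP' hP).trans (algebraMap_mono _ ?_)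
    rw [norm_sub_rev P' P]
    exact hbound hP (le_max_left _ _)
  · exact (Riccati.riccatiStep_sub_le_algebraMap hτ.le hR hP hP').trans
      (algebraMap_mono _ (hbound hP' (le_max_right _ _)))

/-- The one-step Riccati operator is Lipschitz on positive semidefinite
matrices: `‖Γ(P) - Γ(P')‖₂ ≤ (1 + τ‖R⁻¹‖₂‖B‖₂² max{‖P‖₂,‖P'‖₂})² (1 + τ‖A‖₂)² ‖P - P'‖₂`. -/
theorem riccatiStep_lipschitz {n d : ℕ} (τ : ℝ) (hτ : 0 < τ)
    (Q A : Matrix (Fin n) (Fin n) ℝ) (R : Matrix (Fin d) (Fin d) ℝ)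
    (B : Matrix (Fin n) (Fin d) ℝ) (hQ : Q.PosDef) (hR : R.PosDef)
    (P P' : Matrix (Fin n) (Fin n) ℝ) (hP : P.PosSemidef) (hP' : P'.PosSemidef) :
    sNorm (riccatiStep τ Q A R B P - riccatiStep τ Q A R B P') ≤
      (1 + τ * sNorm R⁻¹ * sNorm B ^ 2 * max (sNorm P) (sNorm P')) ^ 2 *
        (1 + τ * sNorm A) ^ 2 * sNorm (P - P') :=
  riccatiStep_lipschitz_general τ hτ Q A R B hR P P' hP hP'
end

section
/- Let B ∈ ℝ^{n×d} and R ∈ 𝕊ᵈ₊, and let P : [0,T] → 𝕊ⁿ₀ solve the Riccati ODE with terminal condition P_T = 0 and Q ∈ 𝕊ⁿ₊. Then B has full column rank if and only if the only v ∈ ℝᵈ satisfying P_t B R⁻¹ v = 0 for all t ∈ [0,T] is v = 0. -/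
open Matrix

/-- Let `B ∈ ℝ^{n×d}`, `R ∈ 𝕊ᵈ₊`, `Q ∈ 𝕊ⁿ₊`, and let `P : [0,T] → 𝕊ⁿ₀`
solve the Riccati ODE `dP/dt + AᵀP + PA - PBR⁻¹BᵀP + Q = 0` with `P_T = 0`. Then `B` has full
column rank if and only if the only `v ∈ ℝᵈ` satisfying `P_t B R⁻¹ v = 0` for all `t ∈ [0,T]`
is `v = 0`. -/
theorem fullRank_iff_riccati_observability {n d : ℕ} (T : ℝ) (hT : 0 < T)
    (A : Matrix (Fin n) (Fin n) ℝ) (B : Matrix (Fin n) (Fin d) ℝ)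
    (Q : Matrix (Fin n) (Fin n) ℝ) (R : Matrix (Fin d) (Fin d) ℝ)
    (hQ : Q.PosDef) (hR : R.PosDef)
    (P P' : ℝ → Matrix (Fin n) (Fin n) ℝ)
    (hderiv : ∀ t ∈ Set.Icc (0 : ℝ) T, ∀ i j, HasDerivAt (fun s => P s i j) (P' t i j) t)
    (hriccati : ∀ t ∈ Set.Icc (0 : ℝ) T,
      P' t + Aᵀ * P t + P t * A - P t * B * R⁻¹ * Bᵀ * P t + Q = 0)
    (hPT : P T = 0)
    (hpsd : ∀ t ∈ Set.Icc (0 : ℝ) T, (P t).PosSemidef) :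
    B.rank = d ↔
      ∀ v : Fin d → ℝ, (∀ t ∈ Set.Icc (0 : ℝ) T, (P t * B * R⁻¹).mulVec v = 0) → v = 0 := by
  -- rank ↔ injectivity of mulVec
  have hrank : B.rank = d ↔ Function.Injective B.mulVec := by
    have hrn := LinearMap.finrank_range_add_finrank_ker B.mulVecLin
    rw [Module.finrank_fintype_fun_eq_card, Fintype.card_fin] at hrn
    rw [← Matrix.coe_mulVecLin, ← LinearMap.ker_eq_bot, ← Submodule.finrank_eq_zero (R := ℝ),
      Matrix.rank]
    omega
  -- Core lemma: if P_t x = 0 for all t ∈ [0,T] then x = 0.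
  have hcore : ∀ x : Fin n → ℝ, (∀ t ∈ Set.Icc (0 : ℝ) T, (P t).mulVec x = 0) → x = 0 := by
    intro x hx
    set t : ℝ := T / 2 with htdef
    have ht : t ∈ Set.Icc (0 : ℝ) T := ⟨by positivity, by linarith⟩
    have htnhds : Set.Icc (0 : ℝ) T ∈ nhds t := Icc_mem_nhds (by positivity) (by linarith)
    -- derivative of P_s x at t is zero
    have hP'x : (P' t).mulVec x = 0 := by
      funext i
      have h1 : HasDerivAt (fun s => ∑ j, P s i j * x j) (∑ j, P' t i j * x j) t :=
        HasDerivAt.fun_sum fun j _ => (hderiv t ht i j).mul_const (x j)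
      have h2 : HasDerivAt (fun s => ∑ j, P s i j * x j) 0 t := by
        refine (hasDerivAt_const t (0 : ℝ)).congr_of_eventuallyEq ?_
        filter_upwards [htnhds] with s hs
        have := congrFun (hx s hs) i
        simpa [Matrix.mulVec, dotProduct] using this
      have := h1.unique h2
      simpa [Matrix.mulVec, dotProduct] using this
    have hPx := hx t ht
    have hPsym : (P t)ᵀ = P t := (hpsd t ht).1
    have heq := hriccati t ht
    have hquad : x ⬝ᵥ (P' t + Aᵀ * P t + P t * A - P t * B * R⁻¹ * Bᵀ * P t + Q).mulVec x
        = 0 := by rw [heq]; simp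
    have hterm1 : x ⬝ᵥ (Aᵀ * P t).mulVec x = 0 := by
      rw [← Matrix.mulVec_mulVec, hPx]; simp
    have hterm2 : x ⬝ᵥ (P t * A).mulVec x = 0 := by
      rw [← Matrix.mulVec_mulVec, Matrix.dotProduct_mulVec, ← Matrix.mulVec_transpose,
        hPsym, hPx]
      simp
    have hterm3 : x ⬝ᵥ (P t * B * R⁻¹ * Bᵀ * P t).mulVec x = 0 := by
      rw [← Matrix.mulVec_mulVec, hPx]; simp
    have hQx : x ⬝ᵥ Q.mulVec x = 0 := by
      have : x ⬝ᵥ (P' t + Aᵀ * P t + P t * A - P t * B * R⁻¹ * Bᵀ * P t + Q).mulVec x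
          = x ⬝ᵥ (P' t).mulVec x + x ⬝ᵥ (Aᵀ * P t).mulVec x + x ⬝ᵥ (P t * A).mulVec x
            - x ⬝ᵥ (P t * B * R⁻¹ * Bᵀ * P t).mulVec x + x ⬝ᵥ Q.mulVec x := by
        simp [Matrix.add_mulVec, Matrix.sub_mulVec, dotProduct_add, dotProduct_sub]
      rw [this, hP'x, hterm1, hterm2, hterm3] at hquad
      simpa using hquad
    by_contra hxne
    have h2 : (0:ℝ) < x ⬝ᵥ Q.mulVec x := by simpa using hQ.dotProduct_mulVec_pos hxne
    rw [hQx] at h2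
    exact lt_irrefl 0 h2
  rw [hrank]
  constructor
  · intro hinj v hv
    have hx : ∀ t ∈ Set.Icc (0 : ℝ) T, (P t).mulVec (B.mulVec (R⁻¹.mulVec v)) = 0 := by
      intro t ht
      have := hv t ht
      rwa [← Matrix.mulVec_mulVec, ← Matrix.mulVec_mulVec] at this
    have h0 : B.mulVec (R⁻¹.mulVec v) = 0 := hcore _ hx
    have hB0 : B.mulVec 0 = 0 := by simp
    have hRv : R⁻¹.mulVec v = 0 := hinj (by rw [h0, hB0])
    have hRinv : Invertible R := hR.isUnit.invertible
    have := congrArg R.mulVec hRv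
    rwa [Matrix.mulVec_mulVec, Matrix.mul_nonsing_inv _ (isUnit_iff_ne_zero.mpr hR.det_pos.ne'),
      Matrix.one_mulVec, Matrix.mulVec_zero] at this
  · intro hobs
    rw [Function.Injective]
    intro a b hab
    have hdiff : B.mulVec (a - b) = 0 := by
      rw [Matrix.mulVec_sub, hab, sub_self]
    have hv : ∀ t ∈ Set.Icc (0 : ℝ) T, (P t * B * R⁻¹).mulVec (R.mulVec (a - b)) = 0 := by
      intro t ht
      have hRi : R⁻¹.mulVec (R.mulVec (a - b)) = a - b := by
        rw [Matrix.mulVec_mulVec, Matrix.nonsing_inv_mul _ (isUnit_iff_ne_zero.mpr hR.det_pos.ne'), Matrix.one_mulVec]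
      rw [← Matrix.mulVec_mulVec, ← Matrix.mulVec_mulVec, hRi, hdiff, Matrix.mulVec_zero]
    have := hobs _ hv
    have hRab : R.mulVec (a - b) = 0 := this
    have : a - b = 0 := by
      have hinvR : Function.Injective R.mulVec :=
        mulVec_injective_iff_isUnit.mpr hR.isUnit
      have : R.mulVec (a - b) = R.mulVec 0 := by rw [hRab, Matrix.mulVec_zero]
      exact hinvR this
    exact sub_eq_zero.mp this
end
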